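/- arXiv:1207.5908 — 2 statements merged into one kernel-verified Lean document; each statement's English description precedes it below -/
import Mathlib

section
/- Drift bound transfer: let Δ be the generator drift operator of a birth-death process on Z_+^N with bounded rates, and suppose F : Z_+^N → R_+ satisfies |F(x ± e_i) − F(x)| ≤ c for all x, i, and ΔF(x) ≤ −γ̃ for all |x| > K, and |ΔF(x)| ≤ C for all x, with γ̃, c, C > 0. Then for G(x) = exp(δ F(x)) with δ > 0 small enough, there exist γ > 0 and K' such that ΔG(x) ≤ −γ G(x) for all |x| > K'. -/
/-!
Write `G = exp (δ F)`. Since `exp t - 1 ≤ t + t²` for `|t| ≤ 1`, each jump of the process changes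
`G` by at most `G x · (δ u + (δ c)²)`, where `u` is the corresponding jump of `F` and `|u| ≤ c`.
Summing against the rates gives `ΔG x ≤ G x · (δ ΔF x + (δ c)² R)` with `R ≤ 2 N M` the total jump
rate, so outside the ball where `ΔF ≤ -γ̃` we get `ΔG ≤ -(δ γ̃ / 2) G` once `δ c ≤ 1` and
`δ c² · 2 N M ≤ γ̃ / 2`.
-/

open Finset Filter Topology Real

lemma exp_mul_sub_exp_mul_le {a b c δ : ℝ} (hδ : 0 ≤ δ) (hba : |b - a| ≤ c) (hδc : δ * c ≤ 1) :
    exp (δ * b) - exp (δ * a) ≤ exp (δ * a) * (δ * (b - a) + (δ * c) ^ 2) := by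
  set t := δ * (b - a)
  have ht : |t| ≤ δ * c := by
    rw [abs_mul, abs_of_nonneg hδ]
    exact mul_le_mul_of_nonneg_left hba hδ
  have hexp : exp t - 1 ≤ t + t ^ 2 :=
    sub_le_iff_le_add'.mp (le_of_abs_le (abs_exp_sub_one_sub_id_le (ht.trans hδc)))
  have hsq : t ^ 2 ≤ (δ * c) ^ 2 := sq_le_sq' (neg_le_of_abs_le ht) (le_of_abs_le ht)
  calc exp (δ * b) - exp (δ * a) = exp (δ * a) * (exp t - 1) := by
        rw [show δ * b = δ * a + t by ring, exp_add]; ring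
    _ ≤ exp (δ * a) * (t + (δ * c) ^ 2) := by gcongr; linarith

lemma sum_mul_exp_mul_sub_exp_mul_le {ι : Type*} (s : Finset ι) (r b : ι → ℝ) {a c δ : ℝ}
    (hr : ∀ i ∈ s, 0 ≤ r i) (hba : ∀ i ∈ s, |b i - a| ≤ c) (hδ : 0 ≤ δ) (hδc : δ * c ≤ 1) :
    ∑ i ∈ s, r i * (exp (δ * b i) - exp (δ * a)) ≤
      exp (δ * a) * (δ * ∑ i ∈ s, r i * (b i - a) + (δ * c) ^ 2 * ∑ i ∈ s, r i) := by
  calc ∑ i ∈ s, r i * (exp (δ * b i) - exp (δ * a))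
      ≤ ∑ i ∈ s, r i * (exp (δ * a) * (δ * (b i - a) + (δ * c) ^ 2)) :=
        sum_le_sum fun i hi => mul_le_mul_of_nonneg_left
          (exp_mul_sub_exp_mul_le hδ (hba i hi) hδc) (hr i hi)
    _ = _ := by
        simp only [mul_sum, ← sum_add_distrib]
        exact sum_congr rfl fun i _ => by ring

section BirthDeath

variable {ι : Type*} [Fintype ι] [DecidableEq ι]

def birthDeathGenerator (lam : ι → ℝ) (φ : (ι → ℕ) → ι → ℝ) (f : (ι → ℕ) → ℝ) (x : ι → ℕ) : ℝ :=
  (∑ i, lam i * (f (x + Pi.single i 1) - f x)) + ∑ i, φ x i * (f (x - Pi.single i 1) - f x)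

lemma birthDeathGenerator_exp_mul_le {lam : ι → ℝ} {φ : (ι → ℕ) → ι → ℝ} {F : (ι → ℕ) → ℝ}
    {c δ : ℝ} {x : ι → ℕ} (hlam : ∀ i, 0 ≤ lam i) (hφ : ∀ i, 0 ≤ φ x i)
    (hinc : ∀ i, |F (x + Pi.single i 1) - F x| ≤ c ∧ |F (x - Pi.single i 1) - F x| ≤ c)
    (hδ : 0 ≤ δ) (hδc : δ * c ≤ 1) :
    birthDeathGenerator lam φ (fun y => exp (δ * F y)) x ≤
      exp (δ * F x) * (δ * birthDeathGenerator lam φ F x +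
        (δ * c) ^ 2 * ((∑ i, lam i) + ∑ i, φ x i)) := by
  have hbirth := sum_mul_exp_mul_sub_exp_mul_le univ lam (fun i => F (x + Pi.single i 1))
    (fun i _ => hlam i) (fun i _ => (hinc i).1) hδ hδc
  have hdeath := sum_mul_exp_mul_sub_exp_mul_le univ (φ x) (fun i => F (x - Pi.single i 1))
    (fun i _ => hφ i) (fun i _ => (hinc i).2) hδ hδc
  unfold birthDeathGenerator
  linear_combination hbirth + hdeath

end BirthDeath

lemma exists_pos_mul_le_one_and_mul_lt (c k γ : ℝ) (hγ : 0 < γ) :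
    ∃ δ : ℝ, 0 < δ ∧ δ * c ≤ 1 ∧ δ * k < γ := by
  have hc : ∀ᶠ δ in 𝓝[>] (0 : ℝ), δ * c < 1 :=
    nhdsWithin_le_nhds <| (tendsto_id.mul_const c).eventually_lt_const (by simp)
  have hk : ∀ᶠ δ in 𝓝[>] (0 : ℝ), δ * k < γ :=
    nhdsWithin_le_nhds <| (tendsto_id.mul_const k).eventually_lt_const (by simpa using hγ)
  obtain ⟨δ, hδ, hδc, hδk⟩ := (eventually_mem_nhdsWithin.and (hc.and hk)).exists
  exact ⟨δ, hδ, hδc.le, hδk⟩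

theorem exponential_drift_transfer_general (N : ℕ)
    (lam : Fin N → ℝ) (φ : (Fin N → ℕ) → Fin N → ℝ) (M : ℝ)
    (hrates : ∀ i, 0 ≤ lam i ∧ lam i ≤ M)
    (hφ : ∀ x i, 0 ≤ φ x i ∧ φ x i ≤ M)
    (Δ : ((Fin N → ℕ) → ℝ) → (Fin N → ℕ) → ℝ)
    (hΔ : ∀ f x, Δ f x =
      (∑ i, lam i * (f (x + Pi.single i 1) - f x)) +
      ∑ i, φ x i * (f (x - Pi.single i 1) - f x))
    (F : (Fin N → ℕ) → ℝ)
    (c : ℝ)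
    (hinc : ∀ (x : Fin N → ℕ) i, |F (x + Pi.single i 1) - F x| ≤ c ∧
      |F (x - Pi.single i 1) - F x| ≤ c)
    (γ' K : ℝ) (hγ' : 0 < γ')
    (hdrift : ∀ x : Fin N → ℕ, K < ∑ i, (x i : ℝ) → Δ F x ≤ -γ') :
    ∃ δ γ K' : ℝ, 0 < δ ∧ 0 < γ ∧
      ∀ x : Fin N → ℕ, K' < ∑ i, (x i : ℝ) →
        Δ (fun y => Real.exp (δ * F y)) x ≤ -γ * Real.exp (δ * F x) := by
  obtain rfl : Δ = birthDeathGenerator lam φ := funext₂ hΔ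
  obtain ⟨δ, hδ, hδc, hδR⟩ := exists_pos_mul_le_one_and_mul_lt c (c ^ 2 * (2 * N * M)) (γ' / 2)
    (half_pos hγ')
  refine ⟨δ, δ * γ' / 2, K, hδ, by positivity, fun x hx => ?_⟩
  have htotal : (∑ i, lam i) + ∑ i, φ x i ≤ 2 * N * M := by
    have hb : ∑ i, lam i ≤ N * M := by simpa using sum_le_sum (s := univ) fun i _ => (hrates i).2
    have hd : ∑ i, φ x i ≤ N * M := by simpa using sum_le_sum (s := univ) fun i _ => (hφ x i).2
    linarith
  have hG := birthDeathGenerator_exp_mul_le (fun i => (hrates i).1) (fun i => (hφ x i).1)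
    (hinc x) hδ.le hδc
  have hpos : 0 < exp (δ * F x) * δ := by positivity
  calc _ ≤ exp (δ * F x) * (δ * birthDeathGenerator lam φ F x +
        (δ * c) ^ 2 * ((∑ i, lam i) + ∑ i, φ x i)) := hG
    _ = exp (δ * F x) * δ * birthDeathGenerator lam φ F x +
        exp (δ * F x) * ((δ * c) ^ 2 * ((∑ i, lam i) + ∑ i, φ x i)) := by ring
    _ ≤ exp (δ * F x) * δ * (-γ') + exp (δ * F x) * ((δ * c) ^ 2 * (2 * N * M)) := by
        gcongr
        exact hdrift x hx
    _ = exp (δ * F x) * δ * (-γ' + δ * (c ^ 2 * (2 * N * M))) := by ring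
    _ ≤ exp (δ * F x) * δ * (-(γ' / 2)) := by gcongr; linarith
    _ = _ := by ring

/-- drift bound transfer. If `F ≥ 0` has bounded increments,
bounded drift, and drift `≤ −γ̃` outside a ball, then for small `δ > 0` the
function `G = exp(δ F)` satisfies a geometric drift inequality
`ΔG(x) ≤ −γ G(x)` outside a (possibly larger) ball. -/
theorem exponential_drift_transfer (N : ℕ)
    (lam : Fin N → ℝ) (φ : (Fin N → ℕ) → Fin N → ℝ) (M : ℝ)
    (hrates : ∀ i, 0 ≤ lam i ∧ lam i ≤ M)
    (hφ : ∀ x i, 0 ≤ φ x i ∧ φ x i ≤ M)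
    (hφ0 : ∀ (x : Fin N → ℕ) i, x i = 0 → φ x i = 0)
    (Δ : ((Fin N → ℕ) → ℝ) → (Fin N → ℕ) → ℝ)
    (hΔ : ∀ f x, Δ f x =
      (∑ i, lam i * (f (x + Pi.single i 1) - f x)) +
      ∑ i, φ x i * (f (x - Pi.single i 1) - f x))
    (F : (Fin N → ℕ) → ℝ) (hFpos : ∀ x, 0 ≤ F x)
    (c : ℝ) (hc : 0 < c)
    (hinc : ∀ (x : Fin N → ℕ) i, |F (x + Pi.single i 1) - F x| ≤ c ∧
      |F (x - Pi.single i 1) - F x| ≤ c)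
    (γ' C K : ℝ) (hγ' : 0 < γ') (hC : 0 < C)
    (hdrift : ∀ x : Fin N → ℕ, K < ∑ i, (x i : ℝ) → Δ F x ≤ -γ')
    (hbdd : ∀ x, |Δ F x| ≤ C) :
    ∃ δ γ K' : ℝ, 0 < δ ∧ 0 < γ ∧
      ∀ x : Fin N → ℕ, K' < ∑ i, (x i : ℝ) →
        Δ (fun y => Real.exp (δ * F y)) x ≤ -γ * Real.exp (δ * F x) :=
  exponential_drift_transfer_general N lam φ M hrates hφ Δ hΔ F c hinc γ' K hγ' hdrift
end

section
/- Let π be a probability measure on Z_+^N that is the stationary distribution of a birth-death process with birth rates λ_i > 0 and death rates bounded above by φ̄ < ∞. Then for every x ∈ Z_+^N and n ∈ N, π({y : y ≥ nx}) ≥ K_1 (λ_min/φ̄)^{n|x|} for some constant K_1 > 0 independent of n, where λ_min = min_i λ_i and y ≥ nx means coordinatewise. -/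
/-!
Write `T v = π {y | v ≤ y}`. Summing the balance equations over the upper set `{y | v ≤ y}`
equates the flow into it, `∑ i, λᵢ (T (v - eᵢ) - T v)`, with the flow out through its faces
`{y | v ≤ y, yᵢ = vᵢ}`, which is at most `φ̄ ∑_{vᵢ ≠ 0} (T v - T (v + eᵢ))` since `φᵢ` vanishes on
`yᵢ = 0`. For `0 ≤ s < 1` with `φ̄ s ≤ λᵢ`, the profile `s ^ |v|` satisfies the reverse
inequality, so `T v - s ^ |v|` obeys a discrete minimum principle: at a global minimum all
backward differences vanish, so the minimum propagates down to `v = 0`, where the value is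
`1 - 1 = 0`; and a negative minimum would be attained because `s ^ |v| → 0`. Hence
`T v ≥ s ^ |v|`, and `K₁ = 1` works with `s = λ_min / φ̄`. This `s` is `< 1`: otherwise every
`s < 1` is admissible, so `T ≡ 1` and `π` would vanish identically.
-/

open Set Filter Topology

namespace BirthDeath

section Tail

variable {ι : Type*}

noncomputable def tail (g : (ι → ℕ) → ℝ) (v : ι → ℕ) : ℝ :=
  ∑' y, (Ici v).indicator g y

variable {g h : (ι → ℕ) → ℝ}

lemma tail_nonneg (hg : 0 ≤ g) (v : ι → ℕ) : 0 ≤ tail g v :=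
  tsum_nonneg (indicator_nonneg fun y _ => hg y)

lemma tail_zero (g : (ι → ℕ) → ℝ) : tail g 0 = ∑' y, g y := by
  simp [tail]

lemma tail_sub (hg : Summable g) (hh : Summable h) (v : ι → ℕ) :
    tail (g - h) v = tail g v - tail h v := by
  simp only [tail, indicator_sub']
  exact (hg.indicator _).tsum_sub (hh.indicator _)

lemma tail_antitone (hg : 0 ≤ g) (hg' : Summable g) : Antitone (tail g) := fun _ _ hvw =>
  (hg'.indicator _).tsum_le_tsum
    (indicator_le_indicator_of_subset (Ici_subset_Ici.2 hvw) fun y => hg y) (hg'.indicator _)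

lemma tail_sub_tail_le (hg : Summable g) (hh : Summable h) (hgh : g ≤ h) {v w : ι → ℕ}
    (hvw : v ≤ w) : tail g v - tail g w ≤ tail h v - tail h w := by
  have := tail_antitone (sub_nonneg.2 hgh) (hh.sub hg) hvw
  rw [tail_sub hh hg, tail_sub hh hg] at this
  linarith

lemma tail_add_le_tsum (hg : 0 ≤ g) (hg' : Summable g) {v y : ι → ℕ} (hy : ¬v ≤ y) :
    tail g v + g y ≤ ∑' z, g z := by
  classical
  rw [hg'.tsum_eq_add_tsum_ite y, add_comm]
  gcongr
  refine (hg'.indicator _).tsum_le_tsum (fun z => ?_) ?_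
  · split_ifs with hz
    · simp [hz, hy]
    · exact indicator_le_self' (fun z _ => hg z) z
  · exact (hg'.indicator {y}ᶜ).congr fun z => by simp [indicator_apply]

lemma range_add_right (a : ι → ℕ) : range (· + a) = Ici a := by
  ext y
  refine ⟨?_, fun hy => ⟨y - a, tsub_add_cancel_of_le hy⟩⟩
  rintro ⟨z, rfl⟩
  exact (le_add_self : a ≤ z + a)

lemma hasSum_tail_add (hg : Summable g) (v a : ι → ℕ) :
    HasSum ((Ici v).indicator fun y => g (y + a)) (tail g (v + a)) := by
  have hsupp : ∀ y ∉ range (· + a), (Ici (v + a)).indicator g y = 0 := by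
    rw [range_add_right]
    exact fun y hy => indicator_of_notMem (fun hy' => hy (le_trans le_add_self hy')) _
  have hcomp : ((Ici v).indicator fun y => g (y + a)) = (Ici (v + a)).indicator g ∘ (· + a) := by
    ext y
    by_cases hy : v ≤ y <;> simp [hy]
  rw [hcomp, (add_left_injective a).hasSum_iff hsupp]
  exact (hg.indicator _).hasSum

lemma hasSum_tail_sub (hg : Summable g) (v a : ι → ℕ) :
    HasSum ((Ici v).indicator ((Ici a).indicator fun y => g (y - a))) (tail g (v - a)) := by
  have hsupp : ∀ y ∉ range (· + a),
      (Ici v).indicator ((Ici a).indicator fun y => g (y - a)) y = 0 := by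
    rw [range_add_right]
    exact fun y hy => by simp [hy]
  have hcomp : (Ici (v - a)).indicator g =
      (Ici v).indicator ((Ici a).indicator fun y => g (y - a)) ∘ (· + a) := by
    ext y
    have ha : y + a ∈ Ici a := mem_Ici.2 le_add_self
    by_cases hy : v ≤ y + a <;> simp [tsub_le_iff_right, hy, ha]
  rw [← (add_left_injective a).hasSum_iff hsupp, ← hcomp]
  exact (hg.indicator _).hasSum

lemma tail_const_mul (c : ℝ) (g : (ι → ℕ) → ℝ) (v : ι → ℕ) :
    tail (fun y => c * g y) v = c * tail g v := by
  simp only [tail, indicator_const_mul, tsum_mul_left]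

end Tail

section Coordinates

variable {ι : Type*} [DecidableEq ι]

lemma single_one_le_iff {y : ι → ℕ} {i : ι} : Pi.single i 1 ≤ y ↔ 1 ≤ y i := by
  refine ⟨fun h => by simpa using h i, fun h j => ?_⟩
  rcases eq_or_ne j i with rfl | hj
  · simpa using h
  · simp [hj]

lemma sub_single_of_eq_zero {v : ι → ℕ} {i : ι} (hv : v i = 0) : v - Pi.single i 1 = v := by
  ext j
  rcases eq_or_ne j i with rfl | hj
  · simp [hv]
  · simp [hj]

lemma sum_add_single [Fintype ι] (v : ι → ℕ) (i : ι) :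
    ∑ j, (v + Pi.single i 1 : ι → ℕ) j = ∑ j, v j + 1 := by
  simp [Finset.sum_add_distrib]

lemma sum_sub_single_add_one [Fintype ι] {v : ι → ℕ} {i : ι} (hv : v i ≠ 0) :
    ∑ j, (v - Pi.single i 1 : ι → ℕ) j + 1 = ∑ j, v j := by
  rw [← sum_add_single,
    tsub_add_cancel_of_le (single_one_le_iff.2 (Nat.one_le_iff_ne_zero.2 hv))]

lemma tail_add_single_of_eq_zero {g : (ι → ℕ) → ℝ} {v : ι → ℕ} {i : ι}
    (hg : ∀ y, y i = 0 → g y = 0) (hv : v i = 0) : tail g (v + Pi.single i 1) = tail g v := by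
  classical
  refine tsum_congr fun y => ?_
  rcases eq_or_ne (y i) 0 with hy | hy
  · simp [indicator_apply, hg y hy]
  have hle : v + Pi.single i 1 ≤ y ↔ v ≤ y := by
    refine ⟨le_trans le_self_add, fun h j => ?_⟩
    rcases eq_or_ne j i with rfl | hj
    · simpa [hv, Nat.one_le_iff_ne_zero] using hy
    · simpa [hj] using h j
  simp [indicator_apply, hle]

end Coordinates

section Flux

variable {ι : Type*} [Fintype ι] [DecidableEq ι]

def GlobalBalance (lam : ι → ℝ) (φ : (ι → ℕ) → ι → ℝ) (π : (ι → ℕ) → ℝ) : Prop :=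
  ∀ y : ι → ℕ, π y * ((∑ i, lam i) + ∑ i, φ y i) =
    (∑ i, π (y + Pi.single i 1) * φ (y + Pi.single i 1) i) +
    ∑ i, (if 1 ≤ y i then π (y - Pi.single i 1) * lam i else 0)

/-- Balance of the probability flow across the boundary of the upper set `{y | v ≤ y}`. -/
theorem sum_lam_mul_tail_sub_eq {lam : ι → ℝ} {φ : (ι → ℕ) → ι → ℝ} {π : (ι → ℕ) → ℝ}
    (hbal : GlobalBalance lam φ π) (hπ : Summable π) (hφπ : ∀ i, Summable fun y => π y * φ y i)
    (v : ι → ℕ) :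
    ∑ i, lam i * (tail π (v - Pi.single i 1) - tail π v) =
      ∑ i, (tail (fun y => π y * φ y i) v - tail (fun y => π y * φ y i) (v + Pi.single i 1)) := by
  have hout : HasSum ((Ici v).indicator fun y => π y * ((∑ i, lam i) + ∑ i, φ y i))
      ((∑ i, lam i) * tail π v + ∑ i, tail (fun y => π y * φ y i) v) := by
    refine (((hπ.indicator (Ici v)).hasSum.mul_left (∑ i, lam i)).add
      (hasSum_sum fun i _ => ((hφπ i).indicator (Ici v)).hasSum)).congr_fun fun y => ?_
    by_cases hy : v ≤ y <;> simp [hy, mul_add, Finset.mul_sum, mul_comm]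
  have hin : HasSum ((Ici v).indicator fun y =>
        (∑ i, π (y + Pi.single i 1) * φ (y + Pi.single i 1) i) +
        ∑ i, (if 1 ≤ y i then π (y - Pi.single i 1) * lam i else 0))
      (∑ i, tail (fun y => π y * φ y i) (v + Pi.single i 1) +
        ∑ i, lam i * tail π (v - Pi.single i 1)) := by
    refine ((hasSum_sum fun i _ => hasSum_tail_add (hφπ i) v (Pi.single i 1)).add
      (hasSum_sum fun i _ => (hasSum_tail_sub hπ v (Pi.single i 1)).mul_left (lam i))).congr_fun
      fun y => ?_
    by_cases hy : v ≤ y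
    · simp only [indicator_of_mem (mem_Ici.2 hy)]
      congr 1
      refine Finset.sum_congr rfl fun i _ => ?_
      by_cases hi : 1 ≤ y i <;> simp [hi, single_one_le_iff, mul_comm]
    · simp [hy]
  have := hout.unique (funext hbal ▸ hin)
  simp only [mul_sub, Finset.sum_sub_distrib, ← Finset.sum_mul] at this ⊢
  linarith

end Flux

lemma exists_isMinOn_of_finite {α : Type*} {w : α → ℝ} (hw : ∀ ε > 0, {v | w v ≤ -ε}.Finite)
    {v₀ : α} (hv₀ : w v₀ < 0) : ∃ v, IsMinOn w univ v := by
  have hfin : {v | w v ≤ w v₀}.Finite := by simpa using hw _ (neg_pos.2 hv₀)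
  obtain ⟨v, hv, hmin⟩ := exists_min_image _ w hfin ⟨v₀, show w v₀ ≤ w v₀ from le_rfl⟩
  refine ⟨v, fun z _ => ?_⟩
  by_cases hz : w z ≤ w v₀
  · exact hmin z hz
  · exact (hv : w v ≤ w v₀).trans (not_le.1 hz).le

section MinimumPrinciple

variable {ι : Type*} [Fintype ι] [DecidableEq ι] {lam : ι → ℝ} {w : (ι → ℕ) → ℝ}

lemma apply_sub_single_of_isMinOn (hlam : ∀ i, 0 < lam i)
    (hw : ∀ v, (∀ i, w v ≤ w (v + Pi.single i 1)) →
      ∑ i, lam i * (w (v - Pi.single i 1) - w v) ≤ 0)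
    {v : ι → ℕ} (hv : IsMinOn w univ v) (i : ι) : w (v - Pi.single i 1) = w v := by
  have hterm : ∀ j ∈ Finset.univ, 0 ≤ lam j * (w (v - Pi.single j 1) - w v) :=
    fun j _ => mul_nonneg (hlam j).le (sub_nonneg.2 (hv (mem_univ _)))
  have hzero := (Finset.sum_eq_zero_iff_of_nonneg hterm).1
    ((hw v fun j => hv (mem_univ _)).antisymm (Finset.sum_nonneg hterm)) i (Finset.mem_univ i)
  rcases mul_eq_zero.1 hzero with h | h
  · exact absurd h (hlam i).ne'
  · linarith

lemma isMinOn_zero_of_isMinOn (hlam : ∀ i, 0 < lam i)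
    (hw : ∀ v, (∀ i, w v ≤ w (v + Pi.single i 1)) →
      ∑ i, lam i * (w (v - Pi.single i 1) - w v) ≤ 0)
    {v : ι → ℕ} (hv : IsMinOn w univ v) : IsMinOn w univ 0 := by
  induction v using WellFoundedLT.induction with
  | _ v ih =>
    rcases eq_or_ne v 0 with rfl | hne
    · exact hv
    obtain ⟨i, hi⟩ := Function.ne_iff.1 hne
    have hi : v i ≠ 0 := hi
    refine ih (v - Pi.single i 1) (lt_of_le_of_ne tsub_le_self fun h => hi ?_) ?_
    · have := congr_fun h i
      simp only [Pi.sub_apply, Pi.single_eq_same] at this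
      omega
    · intro z _
      show w (v - Pi.single i 1) ≤ w z
      rw [apply_sub_single_of_isMinOn hlam hw hv i]
      exact hv (mem_univ z)

theorem minimum_principle (hlam : ∀ i, 0 < lam i)
    (hw : ∀ v, (∀ i, w v ≤ w (v + Pi.single i 1)) →
      ∑ i, lam i * (w (v - Pi.single i 1) - w v) ≤ 0)
    (h0 : 0 ≤ w 0) (hfin : ∀ ε > 0, {v | w v ≤ -ε}.Finite) (v : ι → ℕ) : 0 ≤ w v := by
  by_contra! hv
  obtain ⟨m, hm⟩ := exists_isMinOn_of_finite hfin hv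
  exact (h0.trans (isMinOn_zero_of_isMinOn hlam hw hm (mem_univ v))).not_gt hv

end MinimumPrinciple

section GeometricProfile

variable {ι : Type*} [Fintype ι] [DecidableEq ι] {s : ℝ}

lemma finite_setOf_le_pow_sum (hs0 : 0 ≤ s) (hs1 : s < 1) {ε : ℝ} (hε : 0 < ε) :
    {v : ι → ℕ | ε ≤ s ^ ∑ i, v i}.Finite := by
  obtain ⟨K, hK⟩ := exists_pow_lt_of_lt_one hε hs1
  refine (finite_Iic fun _ => K).subset fun v hv j => ?_
  by_contra! hj
  have hsum : K ≤ ∑ i, v i :=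
    hj.le.trans (Finset.single_le_sum (fun _ _ => Nat.zero_le _) (Finset.mem_univ j))
  exact (pow_le_pow_of_le_one hs0 hs1.le hsum).trans_lt hK |>.not_ge hv

lemma mul_sum_pow_sub_le (hs0 : 0 ≤ s) (hs1 : s ≤ 1) {lam : ι → ℝ} {c : ℝ}
    (hlam : ∀ i, c * s ≤ lam i) (v : ι → ℕ) :
    c * ∑ i ∈ Finset.univ.filter (v · ≠ 0),
        (s ^ ∑ j, v j - s ^ ∑ j, (v + Pi.single i 1 : ι → ℕ) j) ≤
      ∑ i, lam i * (s ^ ∑ j, (v - Pi.single i 1 : ι → ℕ) j - s ^ ∑ j, v j) := by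
  have hvanish : ∑ i ∈ Finset.univ.filter (v · ≠ 0),
      lam i * (s ^ ∑ j, (v - Pi.single i 1 : ι → ℕ) j - s ^ ∑ j, v j) =
      ∑ i, lam i * (s ^ ∑ j, (v - Pi.single i 1 : ι → ℕ) j - s ^ ∑ j, v j) :=
    Finset.sum_filter_of_ne fun i _ hi => by
      contrapose! hi
      rw [sub_single_of_eq_zero hi, sub_self, mul_zero]
  rw [← hvanish, Finset.mul_sum]
  refine Finset.sum_le_sum fun i hi => ?_
  rw [sum_add_single, ← sum_sub_single_add_one (Finset.mem_filter.1 hi).2]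
  set k := ∑ j, (v - Pi.single i 1 : ι → ℕ) j
  have := mul_le_mul_of_nonneg_right (hlam i) (mul_nonneg (pow_nonneg hs0 k) (sub_nonneg.2 hs1))
  calc c * (s ^ (k + 1) - s ^ (k + 1 + 1)) = c * s * (s ^ k * (1 - s)) := by ring
    _ ≤ lam i * (s ^ k * (1 - s)) := this
    _ = lam i * (s ^ k - s ^ (k + 1)) := by ring

end GeometricProfile

structure IsStationary {ι : Type*} [Fintype ι] [DecidableEq ι] (lam : ι → ℝ)
    (φ : (ι → ℕ) → ι → ℝ) (φbar : ℝ) (π : (ι → ℕ) → ℝ) : Prop where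
  lam_pos : ∀ i, 0 < lam i
  φ_nonneg : ∀ y i, 0 ≤ φ y i
  φ_le : ∀ y i, φ y i ≤ φbar
  φ_eq_zero : ∀ y i, y i = 0 → φ y i = 0
  π_nonneg : ∀ y, 0 ≤ π y
  tsum_π : ∑' y, π y = 1
  balance : GlobalBalance lam φ π

namespace IsStationary

variable {ι : Type*} [Fintype ι] [DecidableEq ι] {lam : ι → ℝ} {φ : (ι → ℕ) → ι → ℝ}
  {φbar : ℝ} {π : (ι → ℕ) → ℝ}

lemma summable (h : IsStationary lam φ φbar π) : Summable π := by
  by_contra hπ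
  simpa [tsum_eq_zero_of_not_summable hπ] using h.tsum_π

lemma mul_φ_le (h : IsStationary lam φ φbar π) (y : ι → ℕ) (i : ι) :
    π y * φ y i ≤ φbar * π y := by
  rw [mul_comm]
  exact mul_le_mul_of_nonneg_right (h.φ_le y i) (h.π_nonneg y)

lemma summable_mul_φ (h : IsStationary lam φ φbar π) (i : ι) : Summable fun y => π y * φ y i :=
  h.summable.mul_left φbar |>.of_nonneg_of_le
    (fun y => mul_nonneg (h.π_nonneg y) (h.φ_nonneg y i)) fun y => h.mul_φ_le y i

theorem sum_lam_mul_tail_sub_le (h : IsStationary lam φ φbar π) (v : ι → ℕ) :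
    ∑ i, lam i * (tail π (v - Pi.single i 1) - tail π v) ≤
      φbar * ∑ i ∈ Finset.univ.filter (v · ≠ 0), (tail π v - tail π (v + Pi.single i 1)) := by
  set Ψ : ι → (ι → ℕ) → ℝ := fun i => tail fun y => π y * φ y i
  have hvanish : ∑ i ∈ Finset.univ.filter (v · ≠ 0), (Ψ i v - Ψ i (v + Pi.single i 1)) =
      ∑ i, (Ψ i v - Ψ i (v + Pi.single i 1)) :=
    Finset.sum_filter_of_ne fun i _ hi => by
      contrapose! hi
      simp only [Ψ]
      rw [tail_add_single_of_eq_zero (fun y hy => by rw [h.φ_eq_zero y i hy, mul_zero]) hi,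
        sub_self]
  rw [sum_lam_mul_tail_sub_eq h.balance h.summable h.summable_mul_φ, ← hvanish, Finset.mul_sum]
  refine Finset.sum_le_sum fun i _ => ?_
  have := tail_sub_tail_le (h.summable_mul_φ i) (h.summable.mul_left φbar) (h.mul_φ_le · i)
    (le_self_add : v ≤ v + Pi.single i 1)
  rwa [tail_const_mul, tail_const_mul, ← mul_sub] at this

theorem pow_sum_le_tail (h : IsStationary lam φ φbar π) (hφbar : 0 ≤ φbar) {s : ℝ}
    (hs0 : 0 ≤ s) (hs1 : s < 1) (hslam : ∀ i, φbar * s ≤ lam i) (v : ι → ℕ) :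
    s ^ ∑ i, v i ≤ tail π v := by
  suffices 0 ≤ tail π v - s ^ ∑ i, v i by linarith
  refine minimum_principle (w := fun v => tail π v - s ^ ∑ i, v i) h.lam_pos (fun v hv => ?_)
    ?_ (fun ε hε => ?_) v
  · have hflux := h.sum_lam_mul_tail_sub_le v
    have hprofile := mul_sum_pow_sub_le hs0 hs1.le hslam v
    have hforward : φbar * ∑ i ∈ Finset.univ.filter (v · ≠ 0),
        ((tail π v - s ^ ∑ j, v j) -
          (tail π (v + Pi.single i 1) - s ^ ∑ j, (v + Pi.single i 1 : ι → ℕ) j)) ≤ 0 :=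
      mul_nonpos_of_nonneg_of_nonpos hφbar (Finset.sum_nonpos fun i _ => sub_nonpos.2 (hv i))
    simp only [mul_sub, sub_sub_sub_comm, Finset.sum_sub_distrib] at hflux hprofile hforward ⊢
    linarith
  · simp [tail_zero, h.tsum_π]
  · refine (finite_setOf_le_pow_sum hs0 hs1 hε).subset fun v hv => ?_
    have := tail_nonneg h.π_nonneg v
    change ε ≤ s ^ ∑ i, v i
    change tail π v - s ^ ∑ i, v i ≤ -ε at hv
    linarith

theorem exists_lam_lt [Nonempty ι] (h : IsStationary lam φ φbar π) : ∃ i, lam i < φbar := by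
  by_contra! hlam
  obtain ⟨i⟩ := ‹Nonempty ι›
  have hφbar : 0 ≤ φbar := (h.φ_nonneg 0 i).trans (h.φ_le 0 i)
  have htail : ∀ v, 1 ≤ tail π v := fun v => by
    have hpow : Tendsto (fun s : ℝ => s ^ ∑ i, v i) (𝓝[<] 1) (𝓝 1) := by
      simpa using ((continuous_pow (M := ℝ) (∑ i, v i)).tendsto 1).mono_left nhdsWithin_le_nhds
    refine le_of_tendsto hpow ?_
    filter_upwards [Ioo_mem_nhdsLT one_pos] with s hs
    exact h.pow_sum_le_tail hφbar hs.1.le hs.2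
      (fun j => (mul_le_of_le_one_right hφbar hs.2.le).trans (hlam j)) v
  obtain ⟨y, hy⟩ : ∃ y, π y ≠ 0 := by
    by_contra! hπ
    simpa [hπ] using h.tsum_π
  have hnot : ¬y + Pi.single i 1 ≤ y := fun hle => by simpa using hle i
  have := tail_add_le_tsum h.π_nonneg h.summable hnot
  have := htail (y + Pi.single i 1)
  have := h.π_nonneg y
  rw [h.tsum_π] at *
  exact hy (by linarith)

end IsStationary

end BirthDeath

open BirthDeath

theorem stationary_tail_lower_bound_general (N : ℕ)
    (lam : Fin N → ℝ) (hlam : ∀ i, 0 < lam i)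
    (φ : (Fin N → ℕ) → Fin N → ℝ) (φbar : ℝ) (hφbar : 0 < φbar)
    (hφ : ∀ y i, 0 ≤ φ y i ∧ φ y i ≤ φbar)
    (hφ0 : ∀ (y : Fin N → ℕ) i, y i = 0 → φ y i = 0)
    (π : (Fin N → ℕ) → ℝ) (hπpos : ∀ y, 0 ≤ π y)
    (hπsum : ∑' y : Fin N → ℕ, π y = 1)
    (hbalance : ∀ y : Fin N → ℕ,
      π y * ((∑ i, lam i) + ∑ i, φ y i) =
        (∑ i, π (y + Pi.single i 1) * φ (y + Pi.single i 1) i) +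
        ∑ i, (if 1 ≤ y i then π (y - Pi.single i 1) * lam i else 0))
    (x : Fin N → ℕ) :
    ∃ K₁ : ℝ, 0 < K₁ ∧ ∀ n : ℕ,
      K₁ * ((⨅ i, lam i) / φbar) ^ (n * ∑ i, x i) ≤
        ∑' y : {y : Fin N → ℕ // ∀ i, n * x i ≤ y i}, π y := by
  have h : IsStationary lam φ φbar π :=
    ⟨hlam, fun y i => (hφ y i).1, fun y i => (hφ y i).2, hφ0, hπpos, hπsum, hbalance⟩
  have hinf : ∀ i, ⨅ j, lam j ≤ lam i := ciInf_le ⟨0, by rintro _ ⟨j, rfl⟩; exact (hlam j).le⟩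
  have hr0 : 0 ≤ (⨅ i, lam i) / φbar := div_nonneg (Real.iInf_nonneg fun i => (hlam i).le) hφbar.le
  have hr1 : (⨅ i, lam i) / φbar < 1 := by
    rw [div_lt_one hφbar]
    rcases isEmpty_or_nonempty (Fin N) with hN | hN
    · rwa [Real.iInf_of_isEmpty]
    · obtain ⟨i, hi⟩ := h.exists_lam_lt
      exact (hinf i).trans_lt hi
  have hrlam : ∀ i, φbar * ((⨅ i, lam i) / φbar) ≤ lam i := fun i => by
    rw [mul_div_cancel₀ _ hφbar.ne']
    exact hinf i
  refine ⟨1, one_pos, fun n => ?_⟩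
  have := h.pow_sum_le_tail hφbar.le hr0 hr1 hrlam fun i => n * x i
  rw [one_mul, Finset.mul_sum]
  exact this.trans_eq (tsum_subtype (Ici fun i => n * x i) π).symm

/-- lower bound for stationary tail probabilities. If `π` is a
stationary distribution of a birth-death process on `ℤ₊^N` with birth rates
`λ_i > 0` and death rates `φ_i(y) ≤ φ̄`, then
`π({y : y ≥ n x}) ≥ K₁ (λ_min/φ̄)^{n|x|}` with `K₁ > 0` independent of `n`. -/
theorem stationary_tail_lower_bound (N : ℕ)
    (lam : Fin N → ℝ) (hlam : ∀ i, 0 < lam i)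
    (φ : (Fin N → ℕ) → Fin N → ℝ) (φbar : ℝ) (hφbar : 0 < φbar)
    (hφ : ∀ y i, 0 ≤ φ y i ∧ φ y i ≤ φbar)
    (hφ0 : ∀ (y : Fin N → ℕ) i, y i = 0 → φ y i = 0)
    (hφpos : ∀ (y : Fin N → ℕ) i, 1 ≤ y i → 0 < φ y i)
    (π : (Fin N → ℕ) → ℝ) (hπpos : ∀ y, 0 ≤ π y)
    (hπsum : ∑' y : Fin N → ℕ, π y = 1)
    (hbalance : ∀ y : Fin N → ℕ,
      π y * ((∑ i, lam i) + ∑ i, φ y i) =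
        (∑ i, π (y + Pi.single i 1) * φ (y + Pi.single i 1) i) +
        ∑ i, (if 1 ≤ y i then π (y - Pi.single i 1) * lam i else 0))
    (x : Fin N → ℕ) :
    ∃ K₁ : ℝ, 0 < K₁ ∧ ∀ n : ℕ,
      K₁ * ((⨅ i, lam i) / φbar) ^ (n * ∑ i, x i) ≤
        ∑' y : {y : Fin N → ℕ // ∀ i, n * x i ≤ y i}, π y :=
  stationary_tail_lower_bound_general N lam hlam φ φbar hφbar hφ hφ0 π hπpos hπsum hbalance x
end
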